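/- Combining the ELBO and the mutual-information bounds: for finitely-valued random variables with strictly positive joint distribution and any full-support variational pmfs Q(Z|G) and Q(Ĝ_c), the GRM objective satisfies E[log P(Ĝ_c|G)] − I(Ĝ_c;D) ≥ E[log P(Ĝ_c|G,Z)] − KL(Q(Z|G)‖P(Z|G)) − E[KL(P(Ĝ_c|D,Z)‖Q(Ĝ_c))] + E[log P(Z|D,Ĝ_c)] + H(Z|D). -/

import Mathlib

open Finset

/-- Marginal pmf of a random variable `X` on a finite probability space with pmf `p`. -/
noncomputable def margPMF {Ω α : Type*} [Fintype Ω] [DecidableEq α]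
    (p : Ω → ℝ) (X : Ω → α) (x : α) : ℝ :=
  ∑ ω, if X ω = x then p ω else 0

/-- Mutual information `I(X;Y) = ∑ p(x,y) log (p(x,y) / (p(x) p(y)))`. -/
noncomputable def mutInfo {Ω α β : Type*} [Fintype Ω] [Fintype α] [Fintype β]
    [DecidableEq α] [DecidableEq β] (p : Ω → ℝ) (X : Ω → α) (Y : Ω → β) : ℝ :=
  ∑ x, ∑ y,
    margPMF p (fun ω => (X ω, Y ω)) (x, y) *
      Real.log (margPMF p (fun ω => (X ω, Y ω)) (x, y) / (margPMF p X x * margPMF p Y y))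

/-!
The inequality is the sum of two bounds. The ELBO part is Jensen's inequality for `log` under
`Q(Z|G)`, for each value of `G`:
`E_Q[log P(Ĝ_c|G,Z)] − KL(Q(Z|G)‖P(Z|G)) = E_Q[log (P(Ĝ_c,Z|G) / Q(Z|G))] ≤ log P(Ĝ_c|G)`.
For the information part, the tower property turns `E[KL(P(Ĝ_c|D,Z)‖Q(Ĝ_c))]` into
`E[log (P(Ĝ_c|D,Z) / Q(Ĝ_c))]`, and the chain rule for logarithms of conditional pmfs makes the
difference between `−I(Ĝ_c;D)` and the variational terms equal to `KL(P(Ĝ_c)‖Q(Ĝ_c)) ≥ 0`.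
-/

section Marginals

variable {Ω α β : Type*} [Fintype Ω] [DecidableEq α] [DecidableEq β] (p : Ω → ℝ)

lemma margPMF_nonneg (hp : ∀ ω, 0 ≤ p ω) (X : Ω → α) (x : α) : 0 ≤ margPMF p X x :=
  sum_nonneg fun ω _ => by split_ifs <;> simp [hp ω]

lemma margPMF_pos (hp : ∀ ω, 0 < p ω) {X : Ω → α} {x : α} {ω : Ω} (h : X ω = x) :
    0 < margPMF p X x :=
  calc 0 < p ω := hp ω
    _ = if X ω = x then p ω else 0 := (if_pos h).symm
    _ ≤ margPMF p X x :=
      single_le_sum (f := fun ω => if X ω = x then p ω else 0)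
        (fun ω _ => by split_ifs <;> simp [(hp ω).le]) (mem_univ ω)

lemma margPMF_le_margPMF_comp (hp : ∀ ω, 0 ≤ p ω) (f : α → β) (X : Ω → α) (x : α) :
    margPMF p X x ≤ margPMF p (f ∘ X) (f x) :=
  sum_le_sum fun ω _ => by
    by_cases h : X ω = x
    · simp [h]
    · rw [if_neg h]
      split_ifs <;> simp [hp ω]

lemma margPMF_comp_of_injective {f : α → β} (hf : Function.Injective f) (X : Ω → α) (x : α) :
    margPMF p (f ∘ X) (f x) = margPMF p X x := by
  simp only [margPMF, Function.comp_apply, hf.eq_iff]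

lemma sum_margPMF_mul [Fintype α] (X : Ω → α) (f : α → ℝ) :
    ∑ x, margPMF p X x * f x = ∑ ω, p ω * f (X ω) := by
  simp only [margPMF, sum_mul, ite_mul, zero_mul]
  rw [sum_comm]
  simp

lemma sum_margPMF [Fintype α] (X : Ω → α) : ∑ x, margPMF p X x = ∑ ω, p ω := by
  simpa using sum_margPMF_mul p X fun _ => 1

lemma sum_margPMF_pair [Fintype β] (X : Ω → α) (Y : Ω → β) (x : α) :
    ∑ y, margPMF p (fun ω => (X ω, Y ω)) (x, y) = margPMF p X x := by
  simp only [margPMF, Prod.mk.injEq]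
  rw [sum_comm]
  refine sum_congr rfl fun ω _ => ?_
  by_cases h : X ω = x <;> simp [h]

lemma sum_margPMF_pair_mul [Fintype α] [Fintype β] (X : Ω → α) (Y : Ω → β) (f : α → β → ℝ) :
    ∑ x, ∑ y, margPMF p (fun ω => (X ω, Y ω)) (x, y) * f x y = ∑ ω, p ω * f (X ω) (Y ω) := by
  rw [← sum_margPMF_mul p (fun ω => (X ω, Y ω)) fun v => f v.1 v.2, Fintype.sum_prod_type]

lemma mutInfo_eq_sum [Fintype α] [Fintype β] (X : Ω → α) (Y : Ω → β) :
    mutInfo p X Y = ∑ ω, p ω * Real.log (margPMF p (fun ω' => (X ω', Y ω')) (X ω, Y ω) /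
      (margPMF p X (X ω) * margPMF p Y (Y ω))) :=
  sum_margPMF_pair_mul p X Y _

lemma sum_mul_sum_condPMF_mul [Fintype α] [Fintype β] (hp : ∀ ω, 0 ≤ p ω) (X : Ω → α)
    (Y : Ω → β) (h : α → β → ℝ) :
    ∑ ω, p ω * ∑ x, margPMF p (fun ω' => (X ω', Y ω')) (x, Y ω) / margPMF p Y (Y ω) * h x (Y ω)
      = ∑ ω, p ω * h (X ω) (Y ω) := by
  -- where `P(Y = y) = 0` the joint pmf vanishes too, so the junk value of `/ 0` does no harm
  have hcancel : ∀ x y,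
      margPMF p Y y * (margPMF p (fun ω => (X ω, Y ω)) (x, y) / margPMF p Y y)
        = margPMF p (fun ω => (X ω, Y ω)) (x, y) := by
    intro x y
    rcases (margPMF_nonneg p hp Y y).eq_or_lt with hzero | hpos
    · have hjoint : margPMF p (fun ω => (X ω, Y ω)) (x, y) = 0 :=
        le_antisymm (hzero ▸ margPMF_le_margPMF_comp p hp Prod.snd _ (x, y))
          (margPMF_nonneg p hp _ _)
      rw [hjoint, zero_div, mul_zero]
    · exact mul_div_cancel₀ _ hpos.ne'
  rw [← sum_margPMF_mul p Y fun y =>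
      ∑ x, margPMF p (fun ω => (X ω, Y ω)) (x, y) / margPMF p Y y * h x y,
    ← sum_margPMF_pair_mul p X Y h, sum_comm]
  simp_rw [mul_sum, ← mul_assoc, hcancel]

end Marginals

section Jensen

variable {ι : Type*} [Fintype ι]

lemma sum_mul_log_div_le_log_sum {w f : ι → ℝ} (hw : ∀ i, 0 < w i) (hw1 : ∑ i, w i = 1)
    (hf : ∀ i, 0 < f i) : ∑ i, w i * Real.log (f i / w i) ≤ Real.log (∑ i, f i) := by
  have jensen := strictConcaveOn_log_Ioi.concaveOn.le_map_sum (t := univ)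
    (fun i _ => (hw i).le) hw1 fun i _ => Set.mem_Ioi.mpr (div_pos (hf i) (hw i))
  simpa only [smul_eq_mul, mul_div_cancel₀ _ (hw _).ne'] using jensen

lemma sum_mul_log_div_nonneg {P Q : ι → ℝ} (hP : ∀ i, 0 < P i) (hP1 : ∑ i, P i = 1)
    (hQ : ∀ i, 0 < Q i) (hQ1 : ∑ i, Q i = 1) : 0 ≤ ∑ i, P i * Real.log (P i / Q i) := by
  have gibbs := sum_mul_log_div_le_log_sum hP hP1 hQ
  have hflip : ∀ i, P i * Real.log (Q i / P i) = -(P i * Real.log (P i / Q i)) := fun i => by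
    rw [← mul_neg, ← Real.log_inv, inv_div]
  rw [hQ1, Real.log_one, sum_congr rfl fun i _ => hflip i, sum_neg_distrib] at gibbs
  exact neg_nonpos.mp gibbs

lemma elbo_le_log {Q f r : ι → ℝ} (hQ : ∀ i, 0 < Q i) (hQ1 : ∑ i, Q i = 1)
    (hf : ∀ i, 0 < f i) (hr : ∀ i, 0 < r i) {s : ℝ} (hs : 0 < s) :
    ∑ i, Q i * Real.log (f i / r i) - ∑ i, Q i * Real.log (Q i / (r i / s))
      ≤ Real.log ((∑ i, f i) / s) := by
  have hterm : ∀ i, Q i * Real.log (f i / r i) - Q i * Real.log (Q i / (r i / s))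
      = Q i * Real.log (f i / s / Q i) := fun i => by
    rw [Real.log_div (hf i).ne' (hr i).ne', Real.log_div (hQ i).ne' (div_pos (hr i) hs).ne',
      Real.log_div (hr i).ne' hs.ne', Real.log_div (div_pos (hf i) hs).ne' (hQ i).ne',
      Real.log_div (hf i).ne' hs.ne']
    ring
  rw [← sum_sub_distrib, sum_congr rfl fun i _ => hterm i, sum_div]
  exact sum_mul_log_div_le_log_sum hQ hQ1 fun i => div_pos (hf i) hs

end Jensen

lemma log_chain_rule_identity {u v w x y q : ℝ} (hu : 0 < u) (hv : 0 < v) (hw : 0 < w)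
    (hx : 0 < x) (hy : 0 < y) (hq : 0 < q) :
    Real.log (u / v / q) - Real.log (w / (x * y)) - Real.log (u / w) + Real.log (v / y)
      = Real.log (x / q) := by
  rw [Real.log_div (div_pos hu hv).ne' hq.ne', Real.log_div hu.ne' hv.ne',
    Real.log_div hw.ne' (mul_pos hx hy).ne', Real.log_mul hx.ne' hy.ne',
    Real.log_div hu.ne' hw.ne', Real.log_div hv.ne' hy.ne', Real.log_div hx.ne' hq.ne']
  ring

section Bounds

variable {Ω α β γ : Type*} [Fintype Ω] [DecidableEq α] [DecidableEq β] [DecidableEq γ]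
  (p : Ω → ℝ)

lemma sum_elbo_le [Fintype β] (hp : ∀ ω, 0 < p ω) (X : Ω → α) (C : Ω → γ) (Z : Ω → β)
    (hfull : ∀ ω b, 0 < margPMF p (fun ω' => (X ω', C ω', Z ω')) (X ω, C ω, b))
    (Q : γ → β → ℝ) (hQ : ∀ c b, 0 < Q c b) (hQ1 : ∀ c, ∑ b, Q c b = 1) :
    (∑ ω, p ω * ∑ b, Q (C ω) b *
        Real.log (margPMF p (fun ω' => (X ω', C ω', Z ω')) (X ω, C ω, b) /
          margPMF p (fun ω' => (C ω', Z ω')) (C ω, b)))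
      - (∑ ω, p ω * ∑ b, Q (C ω) b *
        Real.log (Q (C ω) b /
          (margPMF p (fun ω' => (Z ω', C ω')) (b, C ω) / margPMF p C (C ω))))
      ≤ ∑ ω, p ω *
        Real.log (margPMF p (fun ω' => (X ω', C ω')) (X ω, C ω) / margPMF p C (C ω)) := by
  rw [← sum_sub_distrib]
  refine sum_le_sum fun ω _ => ?_
  rw [← mul_sub]
  refine mul_le_mul_of_nonneg_left ?_ (hp ω).le
  have hswap : ∀ b, margPMF p (fun ω' => (C ω', Z ω')) (C ω, b)
      = margPMF p (fun ω' => (Z ω', C ω')) (b, C ω) :=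
    fun b => (margPMF_comp_of_injective p Prod.swap_injective _ _).symm
  have hmarg : ∑ b, margPMF p (fun ω' => (X ω', C ω', Z ω')) (X ω, C ω, b)
      = margPMF p (fun ω' => (X ω', C ω')) (X ω, C ω) := by
    rw [← sum_margPMF_pair p (fun ω' => (X ω', C ω')) Z]
    exact sum_congr rfl fun b _ =>
      margPMF_comp_of_injective p (Equiv.prodAssoc α γ β).injective
        (fun ω' => ((X ω', C ω'), Z ω')) ((X ω, C ω), b)
  have hZC : ∀ b, 0 < margPMF p (fun ω' => (Z ω', C ω')) (b, C ω) := fun b => by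
    rw [← hswap]
    exact (hfull ω b).trans_le
      (margPMF_le_margPMF_comp p (fun ω => (hp ω).le) Prod.snd _ _)
  simp_rw [hswap, ← hmarg]
  exact elbo_le_log (hQ (C ω)) (hQ1 (C ω)) (hfull ω) hZC (margPMF_pos p hp rfl)

lemma variational_bound_le_neg_mutInfo [Fintype α] [Fintype β] [Fintype γ]
    (hp : ∀ ω, 0 < p ω) (hsum : ∑ ω, p ω = 1) (X : Ω → α) (D : Ω → γ) (Z : Ω → β)
    (hX : ∀ a, 0 < margPMF p X a) (Q : α → ℝ) (hQ : ∀ a, 0 < Q a) (hQ1 : ∑ a, Q a = 1) :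
    - (∑ ω, p ω * ∑ a,
        (margPMF p (fun ω' => (X ω', D ω', Z ω')) (a, D ω, Z ω) /
            margPMF p (fun ω' => (D ω', Z ω')) (D ω, Z ω)) *
          Real.log ((margPMF p (fun ω' => (X ω', D ω', Z ω')) (a, D ω, Z ω) /
              margPMF p (fun ω' => (D ω', Z ω')) (D ω, Z ω)) / Q a))
      + (∑ ω, p ω *
        Real.log (margPMF p (fun ω' => (Z ω', D ω', X ω')) (Z ω, D ω, X ω) /
          margPMF p (fun ω' => (D ω', X ω')) (D ω, X ω)))
      + (- ∑ ω, p ω *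
        Real.log (margPMF p (fun ω' => (Z ω', D ω')) (Z ω, D ω) / margPMF p D (D ω)))
      ≤ - mutInfo p X D := by
  have hKL := sum_mul_sum_condPMF_mul p (fun ω => (hp ω).le) X (fun ω => (D ω, Z ω))
    fun a y => Real.log (margPMF p (fun ω' => (X ω', D ω', Z ω')) (a, y) /
      margPMF p (fun ω' => (D ω', Z ω')) y / Q a)
  beta_reduce at hKL
  have hgibbs : 0 ≤ ∑ ω, p ω * Real.log (margPMF p X (X ω) / Q (X ω)) := by
    rw [← sum_margPMF_mul p X fun a => Real.log (margPMF p X a / Q a)]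
    exact sum_mul_log_div_nonneg hX (by rw [sum_margPMF, hsum]) hQ hQ1
  have hrev : ∀ ω, margPMF p (fun ω' => (Z ω', D ω', X ω')) (Z ω, D ω, X ω)
      = margPMF p (fun ω' => (X ω', D ω', Z ω')) (X ω, D ω, Z ω) := fun ω =>
    margPMF_comp_of_injective p (f := fun t : α × γ × β => (t.2.2, t.2.1, t.1))
      (fun s t h => by simp only [Prod.mk.injEq] at h; exact Prod.ext h.2.2 (Prod.ext h.2.1 h.1))
      (fun ω' => (X ω', D ω', Z ω')) (X ω, D ω, Z ω)
  have hswapDX : ∀ ω, margPMF p (fun ω' => (D ω', X ω')) (D ω, X ω)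
      = margPMF p (fun ω' => (X ω', D ω')) (X ω, D ω) := fun ω =>
    margPMF_comp_of_injective p Prod.swap_injective (fun ω' => (X ω', D ω')) (X ω, D ω)
  have hswapZD : ∀ ω, margPMF p (fun ω' => (Z ω', D ω')) (Z ω, D ω)
      = margPMF p (fun ω' => (D ω', Z ω')) (D ω, Z ω) := fun ω =>
    margPMF_comp_of_injective p Prod.swap_injective (fun ω' => (D ω', Z ω')) (D ω, Z ω)
  have hchain : ∀ ω,
      Real.log (margPMF p (fun ω' => (X ω', D ω', Z ω')) (X ω, D ω, Z ω) /
          margPMF p (fun ω' => (D ω', Z ω')) (D ω, Z ω) / Q (X ω))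
        - Real.log (margPMF p (fun ω' => (X ω', D ω')) (X ω, D ω) /
          (margPMF p X (X ω) * margPMF p D (D ω)))
        - Real.log (margPMF p (fun ω' => (X ω', D ω', Z ω')) (X ω, D ω, Z ω) /
          margPMF p (fun ω' => (X ω', D ω')) (X ω, D ω))
        + Real.log (margPMF p (fun ω' => (D ω', Z ω')) (D ω, Z ω) / margPMF p D (D ω))
        = Real.log (margPMF p X (X ω) / Q (X ω)) := fun ω =>
    log_chain_rule_identity (margPMF_pos p hp rfl) (margPMF_pos p hp rfl) (margPMF_pos p hp rfl)
      (margPMF_pos p hp rfl) (margPMF_pos p hp rfl) (hQ _)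
  simp only [← hchain, mul_add, mul_sub, sum_add_distrib, sum_sub_distrib] at hgibbs
  rw [mutInfo_eq_sum, hKL]
  simp only [hrev, hswapDX, hswapZD]
  linarith

end Bounds

/-- Theorem 3.1, ELBO for the GRM objective: for finitely-valued
random variables `Ĝ_c` (`Gh`), `G`, `Z`, `D` on a finite probability space with
strictly positive joint distribution, and any full-support variational pmfs
`Qz = Q(Z|G)` (one pmf per value of `G`) and `Qg = Q(Ĝ_c)`,
`E[log P(Ĝ_c|G)] − I(Ĝ_c;D)
  ≥ E_{Q}[log P(Ĝ_c|G,Z)] − E[KL(Q(Z|G)‖P(Z|G))]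
    − E[KL(P(Ĝ_c|D,Z)‖Q(Ĝ_c))] + E[log P(Z|D,Ĝ_c)] + H(Z|D)`. -/
theorem grm_elbo {Ω γA γB γC γD : Type*}
    [Fintype Ω] [Fintype γA] [Fintype γB] [Fintype γC] [Fintype γD]
    [DecidableEq γA] [DecidableEq γB] [DecidableEq γC] [DecidableEq γD]
    (p : Ω → ℝ) (hp : ∀ ω, 0 < p ω) (hsum : ∑ ω, p ω = 1)
    (Gh : Ω → γA) (G : Ω → γC) (Z : Ω → γB) (D : Ω → γD)
    (hpos : ∀ a c b d, 0 < margPMF p (fun ω => (Gh ω, G ω, Z ω, D ω)) (a, c, b, d))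
    (Qz : γC → γB → ℝ) (hQz : ∀ c b, 0 < Qz c b) (hQz1 : ∀ c, ∑ b, Qz c b = 1)
    (Qg : γA → ℝ) (hQg : ∀ a, 0 < Qg a) (hQg1 : ∑ a, Qg a = 1) :
    (∑ ω, p ω *
        Real.log (margPMF p (fun ω' => (Gh ω', G ω')) (Gh ω, G ω) / margPMF p G (G ω)))
      - mutInfo p Gh D ≥
    -- E_{Q(Z|G)}[log P(Ĝ_c | G, Z)]
    (∑ ω, p ω * ∑ b, Qz (G ω) b *
        Real.log (margPMF p (fun ω' => (Gh ω', G ω', Z ω')) (Gh ω, G ω, b) /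
          margPMF p (fun ω' => (G ω', Z ω')) (G ω, b)))
    -- − E[KL(Q(Z|G) ‖ P(Z|G))]
    - (∑ ω, p ω * ∑ b, Qz (G ω) b *
        Real.log (Qz (G ω) b /
          (margPMF p (fun ω' => (Z ω', G ω')) (b, G ω) / margPMF p G (G ω))))
    -- − E[KL(P(Ĝ_c|D,Z) ‖ Q(Ĝ_c))]
    - (∑ ω, p ω * ∑ a,
        (margPMF p (fun ω' => (Gh ω', D ω', Z ω')) (a, D ω, Z ω) /
            margPMF p (fun ω' => (D ω', Z ω')) (D ω, Z ω)) *
          Real.log ((margPMF p (fun ω' => (Gh ω', D ω', Z ω')) (a, D ω, Z ω) /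
              margPMF p (fun ω' => (D ω', Z ω')) (D ω, Z ω)) / Qg a))
    -- + E[log P(Z|D,Ĝ_c)]
    + (∑ ω, p ω *
        Real.log (margPMF p (fun ω' => (Z ω', D ω', Gh ω')) (Z ω, D ω, Gh ω) /
          margPMF p (fun ω' => (D ω', Gh ω')) (D ω, Gh ω)))
    -- + H(Z|D)
    + (- ∑ ω, p ω *
        Real.log (margPMF p (fun ω' => (Z ω', D ω')) (Z ω, D ω) / margPMF p D (D ω))) := by
  have hp0 : ∀ ω, 0 ≤ p ω := fun ω => (hp ω).le
  obtain ⟨ω₀, -, -⟩ := Finset.exists_ne_zero_of_sum_ne_zero (hsum ▸ one_ne_zero)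
  have hfull : ∀ ω b, 0 < margPMF p (fun ω' => (Gh ω', G ω', Z ω')) (Gh ω, G ω, b) :=
    fun ω b => (hpos (Gh ω) (G ω) b (D ω)).trans_le
      (margPMF_le_margPMF_comp p hp0 (fun t : γA × γC × γB × γD => (t.1, t.2.1, t.2.2.1)) _ _)
  have hGh : ∀ a, 0 < margPMF p Gh a := fun a =>
    (hpos a (G ω₀) (Z ω₀) (D ω₀)).trans_le (margPMF_le_margPMF_comp p hp0 Prod.fst _ _)
  have elbo := sum_elbo_le p hp Gh G Z hfull Qz hQz hQz1
  have info := variational_bound_le_neg_mutInfo p hp hsum Gh D Z hGh Qg hQg hQg1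
  linarith
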